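/- Let n = 4f+1 be an odd prime with f even, and suppose there exist integers x, y with n = x² + 4y² such that the cyclotomic numbers of order 4 with respect to the generator α satisfy the f-even table. Let s_3 be the binary sequence of length n with support set D_0∪D_3. Then for every 1 ≤ τ < n: R_{s_3}(τ) = −2y − 3 if τ ∈ D_0, R_{s_3}(τ) = 2y + 1 if τ ∈ D_1, R_{s_3}(τ) = 1 − 2y if τ ∈ D_2, and R_{s_3}(τ) = 2y − 3 if τ ∈ D_3. -/

import Mathlib

/-- Cross-correlation of two sequences of length `N` over `ℤ_H`, with `ξ = exp(2πi/H)`. -/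
noncomputable def crossCorr (H N : ℕ) (s t : ZMod N → ZMod H) (τ : ZMod N) : ℂ :=
  ∑ i ∈ Finset.range N,
    Complex.exp (2 * (Real.pi : ℂ) * Complex.I / (H : ℂ)) ^ ((s (i : ZMod N) - t ((i : ZMod N) + τ)).val)

/-- Cross-correlation of two binary sequences of length `N` (an integer). -/
def binCorr (N : ℕ) (s t : ZMod N → ZMod 2) (τ : ZMod N) : ℤ :=
  ∑ i ∈ Finset.range N, (-1 : ℤ) ^ ((s (i : ZMod N) + t ((i : ZMod N) + τ)).val)

/-- Cross-correlation of two quaternary sequences of length `N`, with `ξ = √-1`. -/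
noncomputable def quadCorr (N : ℕ) (s t : ZMod N → ZMod 4) (τ : ZMod N) : ℂ :=
  ∑ i ∈ Finset.range N, Complex.I ^ ((s (i : ZMod N) - t ((i : ZMod N) + τ)).val)

/-- Interleaving `u = I(a, b)`: `u(2i) = a(i)`, `u(2i+1) = b(i)`. -/
def interleaveSeq {H : ℕ} (n : ℕ) (a b : ZMod n → ZMod H) : ZMod (2 * n) → ZMod H :=
  fun k => if k.val % 2 = 0 then a ((k.val / 2 : ℕ) : ZMod n) else b ((k.val / 2 : ℕ) : ZMod n)

/-- The inverse Gray mapping `φ⁻¹ : ℤ₂ × ℤ₂ → ℤ₄`. -/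
def grayInv (a b : ZMod 2) : ZMod 4 :=
  if a = 0 then (if b = 0 then 0 else 1) else (if b = 0 then 3 else 2)

/-- Construction I: the quaternary sequence of length `2n` built from
`a₀, a₁, a₂, a₃` and bits `e₀, e₁, e₂`. -/
def constructionI (n : ℕ) (a0 a1 a2 a3 : ZMod n → ZMod 2)
    (e0 e1 e2 : ZMod 2) : ZMod (2 * n) → ZMod 4 :=
  let lam : ZMod n := (((n + 1) / 2 : ℕ) : ZMod n)
  let c := interleaveSeq n a0 (fun i => e0 + a1 (i + lam))
  let d := interleaveSeq n (fun i => e1 + a2 i) (fun i => e2 + a3 (i + lam))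
  fun i => grayInv (c i) (d i)

/-- The cyclotomic class `D_i` of order 4 w.r.t. the generator `α`. -/
def cycClass (n f : ℕ) (α : ZMod n) (i : ℕ) : Set (ZMod n) :=
  {x | ∃ t < f, x = α ^ (4 * t + i)}

/-- The cyclotomic number `(i, j)` of order 4: `|(D_i + 1) ∩ D_j|`. -/
noncomputable def cycNum (n f : ℕ) (α : ZMod n) (i j : ℕ) : ℕ :=
  Set.ncard {x : ZMod n | x - 1 ∈ cycClass n f α i ∧ x ∈ cycClass n f α j}

open Classical in
/-- The binary sequence of length `n` with support set `D_i ∪ D_j`. -/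
noncomputable def cycSeq (n f : ℕ) (α : ZMod n) (i j : ℕ) : ZMod n → ZMod 2 :=
  fun x => if x ∈ cycClass n f α i ∪ cycClass n f α j then 1 else 0

/-- Six binary sequences with supports `D₀∪D₁, D₀∪D₂, D₀∪D₃, D₁∪D₂, D₁∪D₃, D₂∪D₃`. -/
noncomputable def sixSeq (n f : ℕ) (α : ZMod n) : Fin 6 → ZMod n → ZMod 2
  | 0 => cycSeq n f α 0 1
  | 1 => cycSeq n f α 0 2
  | 2 => cycSeq n f α 0 3
  | 3 => cycSeq n f α 1 2
  | 4 => cycSeq n f α 1 3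
  | 5 => cycSeq n f α 2 3

/-- 16 times the cyclotomic numbers of order 4 in the `f` odd case. -/
def oddTable16 (n x y : ℤ) (i j : ℕ) : ℤ :=
  match i, j with
  | 0, 0 => n - 7 + 2*x
  | 0, 1 => n + 1 + 2*x - 8*y
  | 0, 2 => n + 1 - 6*x
  | 0, 3 => n + 1 + 2*x + 8*y
  | 1, 0 => n - 3 - 2*x
  | 1, 1 => n - 3 - 2*x
  | 1, 2 => n + 1 + 2*x + 8*y
  | 1, 3 => n + 1 + 2*x - 8*y
  | 2, 0 => n - 7 + 2*x
  | 2, 1 => n - 3 - 2*x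
  | 2, 2 => n - 7 + 2*x
  | 2, 3 => n - 3 - 2*x
  | 3, 0 => n - 3 - 2*x
  | 3, 1 => n + 1 + 2*x + 8*y
  | 3, 2 => n + 1 + 2*x - 8*y
  | 3, 3 => n - 3 - 2*x
  | _, _ => 0

/-- 16 times the cyclotomic numbers of order 4 in the `f` even case. -/
def evenTable16 (n x y : ℤ) (i j : ℕ) : ℤ :=
  match i, j with
  | 0, 0 => n - 11 - 6*x
  | 0, 1 => n - 3 + 2*x + 8*y
  | 0, 2 => n - 3 + 2*x
  | 0, 3 => n - 3 + 2*x - 8*y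
  | 1, 0 => n - 3 + 2*x + 8*y
  | 1, 1 => n - 3 + 2*x - 8*y
  | 1, 2 => n + 1 - 2*x
  | 1, 3 => n + 1 - 2*x
  | 2, 0 => n - 3 + 2*x
  | 2, 1 => n + 1 - 2*x
  | 2, 2 => n - 3 + 2*x
  | 2, 3 => n + 1 - 2*x
  | 3, 0 => n - 3 + 2*x - 8*y
  | 3, 1 => n + 1 - 2*x
  | 3, 2 => n + 1 - 2*x
  | 3, 3 => n - 3 + 2*x + 8*y
  | _, _ => 0

/-! The autocorrelation of a binary sequence with support `S` is `n - 4|S| + 4|S ∩ (S - τ)|`.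
For `S = D₀ ∪ D₃` and `τ ∈ D_k`, multiplication by `τ` shifts the class indices by `k`, so
`|S ∩ (S - τ)|` is the sum of the four cyclotomic numbers `(i - k, j - k)` with `i, j ∈ {0, 3}`,
which the table evaluates. -/

theorem sum_range_natCast_eq_sum_zmod {M : Type*} [AddCommMonoid M] (N : ℕ) [NeZero N]
    (g : ZMod N → M) : ∑ i ∈ Finset.range N, g (i : ZMod N) = ∑ i : ZMod N, g i :=
  Finset.sum_nbij' (↑) ZMod.val (fun _ _ => Finset.mem_univ _)
    (fun z _ => Finset.mem_range.2 z.val_lt)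
    (fun _ ha => ZMod.val_cast_of_lt (Finset.mem_range.1 ha)) (fun z _ => ZMod.natCast_zmod_val z)
    (fun _ _ => rfl)

theorem sum_boole_eq_ncard {ι : Type*} [Fintype ι] (p : ι → Prop) [DecidablePred p] :
    ∑ i, (if p i then (1 : ℤ) else 0) = {i | p i}.ncard := by
  rw [Finset.sum_boole, ← Set.ncard_coe_finset, Finset.coe_filter_univ]

theorem neg_one_pow_val_add_zmod_two (a b : ZMod 2) :
    (-1 : ℤ) ^ (a + b).val =
      1 - 2 * (if a = 1 then 1 else 0) - 2 * (if b = 1 then 1 else 0)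
        + 4 * (if a = 1 ∧ b = 1 then 1 else 0) := by
  fin_cases a <;> fin_cases b <;> rfl

theorem binCorr_self_eq (N : ℕ) [NeZero N] (s : ZMod N → ZMod 2) (τ : ZMod N) :
    binCorr N s s τ =
      N - 4 * {i | s i = 1}.ncard + 4 * {i | s i = 1 ∧ s (i + τ) = 1}.ncard := by
  classical
  have hshift : ∑ i : ZMod N, (if s (i + τ) = 1 then (1 : ℤ) else 0)
      = ∑ i : ZMod N, if s i = 1 then 1 else 0 :=
    Equiv.sum_comp (Equiv.addRight τ) fun i => if s i = 1 then (1 : ℤ) else 0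
  rw [binCorr, sum_range_natCast_eq_sum_zmod N fun i => (-1 : ℤ) ^ (s i + s (i + τ)).val]
  simp only [neg_one_pow_val_add_zmod_two, Finset.sum_add_distrib, Finset.sum_sub_distrib,
    ← Finset.mul_sum, hshift, sum_boole_eq_ncard, Finset.sum_const, Finset.card_univ, ZMod.card,
    nsmul_eq_mul, mul_one]
  ring

theorem ncard_setOf_mem_union_left {G : Type*} [Add G] [Finite G] {A A' B : Set G} (τ : G)
    (h : Disjoint A A') :
    {z | z ∈ A ∪ A' ∧ z + τ ∈ B}.ncard =
      {z | z ∈ A ∧ z + τ ∈ B}.ncard + {z | z ∈ A' ∧ z + τ ∈ B}.ncard := by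
  rw [← Set.ncard_union_eq (h.mono (fun _ hz => hz.1) (fun _ hz => hz.1))]
  congr 1
  ext z
  simp only [Set.mem_union, Set.mem_ofPred_eq, or_and_right]

theorem ncard_setOf_mem_union_right {G : Type*} [Add G] [Finite G] {A B B' : Set G} (τ : G)
    (h : Disjoint B B') :
    {z | z ∈ A ∧ z + τ ∈ B ∪ B'}.ncard =
      {z | z ∈ A ∧ z + τ ∈ B}.ncard + {z | z ∈ A ∧ z + τ ∈ B'}.ncard := by
  rw [← Set.ncard_union_eq (Set.disjoint_left.2 fun _ h₁ h₂ => Set.disjoint_left.1 h h₁.2 h₂.2)]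
  congr 1
  ext z
  simp only [Set.mem_union, Set.mem_ofPred_eq, and_or_left]

section CyclotomicClasses

variable {n f : ℕ} [Fact n.Prime] {α : ZMod n}

theorem orderOf_eq_of_forall_eq_pow (hα0 : α ≠ 0)
    (hα : ∀ z : ZMod n, z ≠ 0 → ∃ k : ℕ, z = α ^ k) : orderOf α = n - 1 := by
  have hgen : ∀ u : (ZMod n)ˣ, u ∈ Subgroup.zpowers (Units.mk0 α hα0) := fun u => by
    obtain ⟨k, hk⟩ := hα u u.ne_zero
    exact ⟨k, Units.ext (by simp [hk])⟩
  rw [← Units.val_mk0 hα0, orderOf_units, orderOf_eq_card_of_forall_mem_zpowers hgen,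
    Nat.card_eq_fintype_card, ZMod.card_units]

theorem ne_zero_of_forall_eq_pow [Fact (2 < n)] (hα : ∀ z : ZMod n, z ≠ 0 → ∃ k : ℕ, z = α ^ k) :
    α ≠ 0 := by
  rintro rfl
  obtain ⟨k, hk⟩ := hα (-1) (neg_ne_zero.2 one_ne_zero)
  rcases k with _ | k
  · exact ZMod.neg_one_ne_one (by simpa using hk)
  · simp at hk

theorem isOfFinOrder_of_orderOf_eq (hord : orderOf α = 4 * f) (hf : 0 < f) : IsOfFinOrder α :=
  orderOf_pos_iff.1 (by omega)

theorem mod_four_eq_of_pow_eq_pow (hord : orderOf α = 4 * f) (hf : 0 < f) {a b : ℕ}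
    (h : α ^ a = α ^ b) : a % 4 = b % 4 := by
  have h4f := (isOfFinOrder_of_orderOf_eq hord hf).pow_inj_mod.1 h
  rw [hord] at h4f
  rw [← Nat.mod_mod_of_dvd a (dvd_mul_right 4 f), h4f, Nat.mod_mod_of_dvd b (dvd_mul_right 4 f)]

theorem pow_mem_cycClass (hord : orderOf α = 4 * f) (hf : 0 < f) (m : ℕ) :
    α ^ m ∈ cycClass n f α (m % 4) := by
  have hr : m % (4 * f) < 4 * f := Nat.mod_lt m (by omega)
  have hr4 : m % (4 * f) % 4 = m % 4 := Nat.mod_mod_of_dvd m (dvd_mul_right 4 f)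
  refine ⟨m % (4 * f) / 4, by omega, ?_⟩
  rw [show 4 * (m % (4 * f) / 4) + m % 4 = m % (4 * f) by omega, ← hord, pow_mod_orderOf]

theorem eq_of_mem_cycClass (hord : orderOf α = 4 * f) (hf : 0 < f) {i j : ℕ} (hi : i < 4)
    (hj : j < 4) {z : ZMod n} (hzi : z ∈ cycClass n f α i) (hzj : z ∈ cycClass n f α j) :
    i = j := by
  obtain ⟨t, -, rfl⟩ := hzi
  obtain ⟨s, -, hts⟩ := hzj
  have := mod_four_eq_of_pow_eq_pow hord hf hts
  omega

theorem disjoint_cycClass (hord : orderOf α = 4 * f) (hf : 0 < f) {i j : ℕ} (hi : i < 4)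
    (hj : j < 4) (hij : i ≠ j) : Disjoint (cycClass n f α i) (cycClass n f α j) :=
  Set.disjoint_left.2 fun _ hzi hzj => hij (eq_of_mem_cycClass hord hf hi hj hzi hzj)

theorem pow_mem_cycClass_iff (hord : orderOf α = 4 * f) (hf : 0 < f) {i : ℕ} (hi : i < 4)
    (m : ℕ) : α ^ m ∈ cycClass n f α i ↔ m % 4 = i :=
  ⟨fun h => eq_of_mem_cycClass hord hf (Nat.mod_lt m (by norm_num)) hi
    (pow_mem_cycClass hord hf m) h, fun h => h ▸ pow_mem_cycClass hord hf m⟩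

theorem zero_notMem_cycClass (hord : orderOf α = 4 * f) (hf : 0 < f) (i : ℕ) :
    (0 : ZMod n) ∉ cycClass n f α i := by
  rintro ⟨t, -, ht⟩
  have hunit := (isOfFinOrder_of_orderOf_eq hord hf).isUnit
  exact (hunit.pow (4 * t + i)).ne_zero ht.symm

theorem ncard_cycClass (hord : orderOf α = 4 * f) (hf : 0 < f) {i : ℕ} (hi : i < 4) :
    (cycClass n f α i).ncard = f := by
  have hinj : Set.InjOn (fun t => α ^ (4 * t + i)) (Finset.range f) := fun t ht s hs hts => by
    have h4f := (isOfFinOrder_of_orderOf_eq hord hf).pow_inj_mod.1 hts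
    simp only [Finset.coe_range, Set.mem_Iio] at ht hs
    rw [hord, Nat.mod_eq_of_lt (by omega), Nat.mod_eq_of_lt (by omega)] at h4f
    omega
  have himage : cycClass n f α i = (fun t => α ^ (4 * t + i)) '' (Finset.range f) := by
    ext z
    simp [cycClass, eq_comm]
  rw [himage, hinj.ncard_image, Set.ncard_coe_finset, Finset.card_range]

theorem mul_mem_cycClass_iff (hord : orderOf α = 4 * f) (hf : 0 < f)
    (hα : ∀ z : ZMod n, z ≠ 0 → ∃ k : ℕ, z = α ^ k) {k a : ℕ} (hk : k < 4) (ha : a < 4)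
    {τ : ZMod n} (hτ : τ ∈ cycClass n f α k) (u : ZMod n) :
    τ * u ∈ cycClass n f α a ↔ u ∈ cycClass n f α ((a + 4 - k) % 4) := by
  obtain ⟨t, -, rfl⟩ := hτ
  rcases eq_or_ne u 0 with rfl | hu
  · simp only [mul_zero, zero_notMem_cycClass hord hf]
  obtain ⟨m, rfl⟩ := hα u hu
  rw [← pow_add, pow_mem_cycClass_iff hord hf ha, pow_mem_cycClass_iff hord hf (by omega)]
  omega

/-- Substituting `z = τ (w - 1)` turns the pairs `(z, z + τ) ∈ D_a × D_b` into the pairs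
`(w - 1, w) ∈ D_{a-k} × D_{b-k}` counted by a cyclotomic number. -/
theorem ncard_setOf_mem_cycClass_add_eq_cycNum (hord : orderOf α = 4 * f) (hf : 0 < f)
    (hα : ∀ z : ZMod n, z ≠ 0 → ∃ k : ℕ, z = α ^ k) {k a b : ℕ} (hk : k < 4) (ha : a < 4)
    (hb : b < 4) {τ : ZMod n} (hτ : τ ∈ cycClass n f α k) :
    {z | z ∈ cycClass n f α a ∧ z + τ ∈ cycClass n f α b}.ncard =
      cycNum n f α ((a + 4 - k) % 4) ((b + 4 - k) % 4) := by
  have hτ0 : τ ≠ 0 := fun h => zero_notMem_cycClass hord hf k (h ▸ hτ)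
  have hinj : Function.Injective fun w : ZMod n => τ * (w - 1) := fun w w' h => by
    simpa using mul_left_cancel₀ hτ0 h
  have hsurj : Function.Surjective fun w : ZMod n => τ * (w - 1) := fun z =>
    ⟨τ⁻¹ * z + 1, by field_simp; ring⟩
  rw [cycNum, ← Set.ncard_preimage_of_injective_subset_range hinj
    (hsurj.range_eq ▸ Set.subset_univ _)]
  congr 1
  ext w
  simp only [Set.mem_preimage, Set.mem_ofPred_eq, show τ * (w - 1) + τ = τ * w by ring,
    mul_mem_cycClass_iff hord hf hα hk ha hτ, mul_mem_cycClass_iff hord hf hα hk hb hτ]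

end CyclotomicClasses

theorem cycSeq_eq_one_iff {n f : ℕ} {α : ZMod n} (i j : ℕ) (z : ZMod n) :
    cycSeq n f α i j z = 1 ↔ z ∈ cycClass n f α i ∪ cycClass n f α j := by
  unfold cycSeq
  split_ifs with h <;> simp [h]

theorem binCorr_cycSeq {n f : ℕ} [Fact n.Prime] {α : ZMod n} (hord : orderOf α = 4 * f)
    (hf : 0 < f) (hα : ∀ z : ZMod n, z ≠ 0 → ∃ k : ℕ, z = α ^ k) {a b k : ℕ} (ha : a < 4) (hb : b < 4)
    (hab : a ≠ b) (hk : k < 4) {τ : ZMod n} (hτ : τ ∈ cycClass n f α k) :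
    binCorr n (cycSeq n f α a b) (cycSeq n f α a b) τ =
      n - 8 * f + 4 * (cycNum n f α ((a + 4 - k) % 4) ((a + 4 - k) % 4)
        + cycNum n f α ((a + 4 - k) % 4) ((b + 4 - k) % 4)
        + cycNum n f α ((b + 4 - k) % 4) ((a + 4 - k) % 4)
        + cycNum n f α ((b + 4 - k) % 4) ((b + 4 - k) % 4) : ℕ) := by
  have hdisj := disjoint_cycClass hord hf ha hb hab
  have hcount := fun {c d : ℕ} (hc : c < 4) (hd : d < 4) =>
    ncard_setOf_mem_cycClass_add_eq_cycNum hord hf hα hk hc hd hτ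
  rw [binCorr_self_eq]
  simp only [cycSeq_eq_one_iff]
  rw [Set.ofPred_mem_eq, Set.ncard_union_eq hdisj, ncard_setOf_mem_union_left τ hdisj,
    ncard_setOf_mem_union_right τ hdisj, ncard_setOf_mem_union_right τ hdisj,
    ncard_cycClass hord hf ha, ncard_cycClass hord hf hb, hcount ha ha, hcount ha hb,
    hcount hb ha, hcount hb hb]
  push_cast
  ring

theorem stmt18_general (n f : ℕ) (hp : n.Prime) (hnf : n = 4 * f + 1)
    (x y : ℤ)
    (α : ZMod n) (hα : ∀ z : ZMod n, z ≠ 0 → ∃ k : ℕ, z = α ^ k)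
    (hTab : ∀ i < 4, ∀ j < 4, 16 * (cycNum n f α i j : ℤ) = evenTable16 (n : ℤ) x y i j) :
    ∀ τ : ℕ, 1 ≤ τ → τ < n →
      (((τ : ZMod n) ∈ cycClass n f α 0) →
        binCorr n (cycSeq n f α 0 3) (cycSeq n f α 0 3) (τ : ZMod n) = -2 * y - 3) ∧
      (((τ : ZMod n) ∈ cycClass n f α 1) →
        binCorr n (cycSeq n f α 0 3) (cycSeq n f α 0 3) (τ : ZMod n) = 2 * y + 1) ∧
      (((τ : ZMod n) ∈ cycClass n f α 2) →
        binCorr n (cycSeq n f α 0 3) (cycSeq n f α 0 3) (τ : ZMod n) = 1 - 2 * y) ∧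
      (((τ : ZMod n) ∈ cycClass n f α 3) →
        binCorr n (cycSeq n f α 0 3) (cycSeq n f α 0 3) (τ : ZMod n) = 2 * y - 3) := by
  intro τ _ _
  have : Fact n.Prime := ⟨hp⟩
  have hf : 0 < f := by have := hp.two_le; omega
  have : Fact (2 < n) := ⟨by omega⟩
  have hord : orderOf α = 4 * f := by
    rw [orderOf_eq_of_forall_eq_pow (ne_zero_of_forall_eq_pow hα) hα, hnf, Nat.add_sub_cancel]
  simp only [Nat.forall_lt_succ_right, Nat.not_lt_zero, IsEmpty.forall_iff, implies_true,
    true_and, and_assoc, evenTable16] at hTab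
  obtain ⟨t00, t01, _, t03, t10, t11, t12, _, _, t21, t22, t23, t30, _, t32, t33⟩ := hTab
  refine ⟨fun hτ => ?_, fun hτ => ?_, fun hτ => ?_, fun hτ => ?_⟩ <;>
  · rw [binCorr_cycSeq hord hf hα (by norm_num) (by norm_num) (by norm_num) (by norm_num) hτ]
    norm_num
    linarith

theorem stmt18 (n f : ℕ) (hp : n.Prime) (hnf : n = 4 * f + 1) (hf : Even f)
    (x y : ℤ) (hxy : (n : ℤ) = x ^ 2 + 4 * y ^ 2)
    (α : ZMod n) (hα : ∀ z : ZMod n, z ≠ 0 → ∃ k : ℕ, z = α ^ k)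
    (hTab : ∀ i < 4, ∀ j < 4, 16 * (cycNum n f α i j : ℤ) = evenTable16 (n : ℤ) x y i j) :
    ∀ τ : ℕ, 1 ≤ τ → τ < n →
      (((τ : ZMod n) ∈ cycClass n f α 0) →
        binCorr n (cycSeq n f α 0 3) (cycSeq n f α 0 3) (τ : ZMod n) = -2 * y - 3) ∧
      (((τ : ZMod n) ∈ cycClass n f α 1) →
        binCorr n (cycSeq n f α 0 3) (cycSeq n f α 0 3) (τ : ZMod n) = 2 * y + 1) ∧
      (((τ : ZMod n) ∈ cycClass n f α 2) →
        binCorr n (cycSeq n f α 0 3) (cycSeq n f α 0 3) (τ : ZMod n) = 1 - 2 * y) ∧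
      (((τ : ZMod n) ∈ cycClass n f α 3) →
        binCorr n (cycSeq n f α 0 3) (cycSeq n f α 0 3) (τ : ZMod n) = 2 * y - 3) :=
  stmt18_general n f hp hnf x y α hα hTab
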